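/- Let ϱ, c₀ > 0. There exists ϱ' = ϱ'(ϱ, c₀) > 0 such that: if D₀, D₁, D₂, … is a sequence of ϱ-John domains in ℝ^d with |D_j| ≤ c₀ |D₀ ∩ D_j| for all j ≥ 1 (where |·| denotes Lebesgue measure), then ⋃_{j ≥ 0} D_j is a ϱ'-John domain. -/

import Mathlib

open Set Metric MeasureTheory
open scoped ENNReal NNReal

noncomputable section

/-- The Euclidean plane. -/
abbrev Pt := EuclideanSpace ℝ (Fin 2)

/-- A bounded domain `Ω ⊆ ℝ^d` is a `ϱ`-John domain if there is a John center `p ∈ Ω`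
such that every `x ∈ Ω \ {p}` can be joined to `p` by a rectifiable curve,
parametrized by arc length, whose `ϱ`-carrot is contained in `Ω`. -/
def IsJohnDomain {d : ℕ} (ϱ : ℝ) (Ω : Set (EuclideanSpace ℝ (Fin d))) : Prop :=
  IsOpen Ω ∧ IsConnected Ω ∧ Bornology.IsBounded Ω ∧
  ∃ p ∈ Ω, ∀ x ∈ Ω \ {p}, ∃ L : ℝ, 0 ≤ L ∧
    ∃ γ : ℝ → EuclideanSpace ℝ (Fin d),
      γ 0 = x ∧ γ L = p ∧ MapsTo γ (Icc 0 L) Ω ∧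
      (∀ t ∈ Icc (0:ℝ) L, eVariationOn γ (Icc 0 t) = ENNReal.ofReal t) ∧
      (∀ t ∈ Icc (0:ℝ) L, ball (γ t) (ϱ * t) ⊆ Ω)

/-- A (simple) polygon, encoded by its cyclically ordered list of vertices:
consecutive vertices span the edges, non-adjacent edges are disjoint, adjacent edges
meet exactly in the common vertex, and each vertex is a genuine corner. -/
structure PolygonJ where
  n : ℕ
  three_le : 3 ≤ n
  vertex : ZMod n → Pt
  inj : Function.Injective vertex
  edges_meet : ∀ i j : ZMod n, j ≠ i → j ≠ i + 1 → j + 1 ≠ i →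
    segment ℝ (vertex i) (vertex (i + 1)) ∩ segment ℝ (vertex j) (vertex (j + 1)) = ∅
  adj_meet : ∀ i : ZMod n,
    segment ℝ (vertex i) (vertex (i + 1)) ∩ segment ℝ (vertex (i + 1)) (vertex (i + 2))
      = {vertex (i + 1)}
  corner : ∀ i : ZMod n, ¬ Collinear ℝ ({vertex i, vertex (i + 1), vertex (i + 2)} : Set Pt)

namespace PolygonJ

/-- The boundary polygonal curve of a polygon. -/
def boundary (P : PolygonJ) : Set Pt :=
  ⋃ i : ZMod P.n, segment ℝ (P.vertex i) (P.vertex (i + 1))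

/-- The (closed) region enclosed by the boundary curve: all points whose connected
component in the complement of the boundary is bounded (boundary points included,
since their component is empty). -/
def carrier (P : PolygonJ) : Set Pt :=
  {x : Pt | Bornology.IsBounded (connectedComponentIn P.boundaryᶜ x)}

/-- The set of vertices `𝒱_P`. -/
def vertices (P : PolygonJ) : Set Pt := Set.range P.vertex

open Classical in
/-- The interior angle at the `i`-th vertex; it is the unoriented angle of the two adjacent
edges whenever the corresponding angular bisector points into the polygon, and `2π` minus
this angle otherwise. -/
def interiorAngle (P : PolygonJ) (i : ZMod P.n) : ℝ :=
  if (∃ ε > (0:ℝ), ∀ t ∈ Ioo (0:ℝ) ε,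
        P.vertex i + t • (midpoint ℝ (P.vertex (i - 1)) (P.vertex (i + 1)) - P.vertex i)
          ∈ interior P.carrier)
  then EuclideanGeometry.angle (P.vertex (i - 1)) (P.vertex i) (P.vertex (i + 1))
  else 2 * Real.pi - EuclideanGeometry.angle (P.vertex (i - 1)) (P.vertex i) (P.vertex (i + 1))

/-- The set `𝒱'_P` of concave vertices, i.e. those with interior angle `> π`. -/
def concaveVertices (P : PolygonJ) : Set Pt :=
  {x : Pt | ∃ i : ZMod P.n, P.vertex i = x ∧ Real.pi < P.interiorAngle i}

open Classical in
/-- The interior angle `∢(x, P)` at a point `x` (junk value `0` if `x` is not a vertex). -/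
def angleAt (P : PolygonJ) (x : Pt) : ℝ :=
  if h : ∃ i : ZMod P.n, P.vertex i = x then P.interiorAngle h.choose else 0

end PolygonJ

/-- The intrinsic (geodesic) distance of `p, q` inside `S`: the infimal length of a
Lipschitz curve in `S` joining `p` and `q`. -/
def intrinsicDist (S : Set Pt) (p q : Pt) : ℝ :=
  sInf {L : ℝ | ∃ γ : ℝ → Pt, γ 0 = p ∧ γ 1 = q ∧ MapsTo γ (Icc (0:ℝ) 1) S ∧
    (∃ K : ℝ≥0, LipschitzOnWith K γ (Icc (0:ℝ) 1)) ∧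
    eVariationOn γ (Icc (0:ℝ) 1) = ENNReal.ofReal L}

/-- The intrinsic diameter `d(S)`. -/
def intrinsicDiam (S : Set Pt) : ℝ :=
  sSup {r : ℝ | ∃ p ∈ S, ∃ q ∈ S, intrinsicDist S p q = r}

/-- The segment `[p;q]` induces the partition `P = Q₁ ∪ Q₂` with `Q₁ ∩ Q₂ = [p;q]`. -/
def InducesPartition (P : PolygonJ) (p q : Pt) (Q₁ Q₂ : PolygonJ) : Prop :=
  p ≠ q ∧ p ∈ frontier P.carrier ∧ q ∈ frontier P.carrier ∧
  segment ℝ p q ⊆ P.carrier ∧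
  Q₁.carrier ∪ Q₂.carrier = P.carrier ∧
  Q₁.carrier ∩ Q₂.carrier = segment ℝ p q

/-- `ϑ`-semiconvexity of a polygon. -/
def Semiconvex (ϑ : ℝ) (P : PolygonJ) : Prop :=
  ∀ v ∈ P.concaveVertices, ∀ w ∈ frontier P.carrier, ∀ Q₁ Q₂ : PolygonJ,
    InducesPartition P v w Q₁ Q₂ →
    ϑ * min (intrinsicDiam Q₁.carrier) (intrinsicDiam Q₂.carrier) ≤ dist v w

/-- `ω`-rotundity of a polygon: it contains a ball of radius `≥ ω d(P)`. -/
def Rotund (ω : ℝ) (P : PolygonJ) : Prop :=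
  ∃ x ∈ P.carrier, ∃ r : ℝ, ω * intrinsicDiam P.carrier ≤ r ∧ ball x r ⊆ P.carrier

/-- The `η`-cigar around the segment `[v;w]`. -/
def cigar (v w : Pt) (η : ℝ) : Set Pt :=
  ⋃ s ∈ Icc (0:ℝ) 1, ball (v + s • (w - v)) (η * dist v w * min s (1 - s))

/-- The visible region `cig_P([v;w], η)`. -/
def visCigar (P : PolygonJ) (v w : Pt) (η : ℝ) : Set Pt :=
  {x ∈ closure (cigar v w η) | ∃ p ∈ segment ℝ v w, segment ℝ p x ⊆ P.carrier}

/-- The segmentation property (SP) for the segment `[v;w]` inducing `P = Q₁ ∪ Q₂`. -/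
def SatisfiesSP (P : PolygonJ) (η : ℝ) (v w : Pt) (Q₁ Q₂ : PolygonJ) : Prop :=
  P.concaveVertices ∩ visCigar P v w η ⊆ {v, w} ∧
  (Q₁.n = 3 → (1/2) * Real.arcsin η < Q₁.angleAt v) ∧
  (Q₂.n = 3 → (1/2) * Real.arcsin η < Q₂.angleAt v)

/-- `(SP)`-`ϑ`-semiconvexity (with respect to the parameter `η`). -/
def SPSemiconvex (ϑ η : ℝ) (P : PolygonJ) : Prop :=
  ∀ v ∈ P.concaveVertices, ∀ w ∈ frontier P.carrier, ∀ Q₁ Q₂ : PolygonJ,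
    InducesPartition P v w Q₁ Q₂ → SatisfiesSP P η v w Q₁ Q₂ →
    ϑ * min (intrinsicDiam Q₁.carrier) (intrinsicDiam Q₂.carrier) ≤ dist v w

/-- `N'(Q)`: the number of concave vertices of `P` other than `v, w` lying on `∂Q`. -/
def Nprime (P Q : PolygonJ) (v w : Pt) : ℕ :=
  ((P.concaveVertices \ {v, w}) ∩ frontier Q.carrier).ncard

open Classical in
/-- The auxiliary set `Q_{v,w}` attached to a partition `P = Q₁ ∪ Q₂`. -/
def Qvw (P : PolygonJ) (v w : Pt) (Q₁ Q₂ : PolygonJ) : Set Pt :=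
  if Nprime P Q₁ v w < Nprime P Q₂ v w ∨
      (Nprime P Q₁ v w = Nprime P Q₂ v w ∧ volume Q₁.carrier < volume Q₂.carrier) then
    Q₁.carrier
  else if Nprime P Q₁ v w = Nprime P Q₂ v w ∧ volume Q₁.carrier = volume Q₂.carrier then
    Q₁.carrier ∪ Q₂.carrier
  else Q₂.carrier

/-- The weak segmentation property (WSP). -/
def SatisfiesWSP (P : PolygonJ) (η : ℝ) (v w : Pt) (Q₁ Q₂ : PolygonJ) : Prop :=
  P.concaveVertices ∩ visCigar P v w η ∩ Qvw P v w Q₁ Q₂ ⊆ {v, w} ∧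
  (Q₁.n = 3 → (1/2) * Real.arcsin η < Q₁.angleAt v) ∧
  (Q₂.n = 3 → (1/2) * Real.arcsin η < Q₂.angleAt v)

/-- The width `|A|_{Π,R}` of `A` in the direction `R e₁ = (cos θ, sin θ)`, `R ∈ SO(2)`
being parametrized by the rotation angle `θ`. -/
def dirWidth (A : Set Pt) (θ : ℝ) : ℝ :=
  sSup {r : ℝ | ∃ x ∈ A, ∃ y ∈ A,
    |(x 0 - y 0) * Real.cos θ + (x 1 - y 1) * Real.sin θ| = r}

/-- `min_{R ∈ SO(2)} |A|_{Π,R}`. -/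
def minWidth (A : Set Pt) : ℝ := ⨅ θ : ℝ, dirWidth A θ

/-- `max_{R ∈ SO(2)} |A|_{Π,R}`. -/
def maxWidth (A : Set Pt) : ℝ := ⨆ θ : ℝ, dirWidth A θ

/-- Coordinates of `y` in the frame centered at `x` rotated by the angle `θ`. -/
def localCoords (x y : Pt) (θ : ℝ) : ℝ × ℝ :=
  ((y 0 - x 0) * Real.cos θ + (y 1 - x 1) * Real.sin θ,
    -((y 0 - x 0) * Real.sin θ) + (y 1 - x 1) * Real.cos θ)

/-- `Ω ⊆ ℝ²` has Lipschitz boundary: near every boundary point, after a rotation, `Ω`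
is the region above the graph of a Lipschitz function. -/
def HasLipschitzBoundary (Ω : Set Pt) : Prop :=
  ∀ x ∈ frontier Ω, ∃ r > (0:ℝ), ∃ θ : ℝ, ∃ f : ℝ → ℝ,
    (∃ K : ℝ≥0, LipschitzWith K f) ∧
    Ω ∩ ball x r = {y ∈ ball x r | f (localCoords x y θ).1 < (localCoords x y θ).2}

/-- `Ω ⊆ ℝ²` has `C¹` boundary: near every boundary point, after a rotation, `Ω`
is the region above the graph of a `C¹` function. -/
def HasC1Boundary (Ω : Set Pt) : Prop :=
  ∀ x ∈ frontier Ω, ∃ r > (0:ℝ), ∃ θ : ℝ, ∃ f : ℝ → ℝ,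
    ContDiff ℝ 1 f ∧
    Ω ∩ ball x r = {y ∈ ball x r | f (localCoords x y θ).1 < (localCoords x y θ).2}

/-- The saturation `sat(D)`: the interior of the complement of the unbounded connected
component of `ℝ² \ D`. -/
def saturate (D : Set Pt) : Set Pt :=
  interior {x : Pt | x ∈ D ∨ Bornology.IsBounded (connectedComponentIn Dᶜ x)}

/-- The carrier of an optional polygon (`∅` for `none`). -/
def optPolyCarrier : Option PolygonJ → Set Pt
  | none => ∅
  | some Q => Q.carrier

/-- The concave vertices of an optional polygon (`∅` for `none`). -/
def optPolyConcave : Option PolygonJ → Set Pt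
  | none => ∅
  | some Q => Q.concaveVertices

end
noncomputable section

namespace JohnUnion

abbrev Euc (d : ℕ) := EuclideanSpace ℝ (Fin d)

variable {d : ℕ}

/-- A John domain together with a chosen center. -/
def JohnPair (ϱ : ℝ) (D : Set (Euc d)) (p : Euc d) : Prop :=
  IsOpen D ∧ Bornology.IsBounded D ∧ p ∈ D ∧
  ∀ x ∈ D \ {p}, ∃ L : ℝ, 0 ≤ L ∧ ∃ γ : ℝ → Euc d,
    γ 0 = x ∧ γ L = p ∧ MapsTo γ (Icc 0 L) D ∧
    (∀ t ∈ Icc (0:ℝ) L, eVariationOn γ (Icc 0 t) = ENNReal.ofReal t) ∧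
    (∀ t ∈ Icc (0:ℝ) L, ball (γ t) (ϱ * t) ⊆ D)

theorem johnPair_mono {ϱ ϱ' : ℝ} (h' : 0 ≤ ϱ') (hle : ϱ' ≤ ϱ) {D : Set (Euc d)} {p : Euc d}
    (h : JohnPair ϱ D p) : JohnPair ϱ' D p := by
  obtain ⟨h1, h2, h3, h4⟩ := h
  refine ⟨h1, h2, h3, fun x hx => ?_⟩
  obtain ⟨L, hL, γ, hγ0, hγL, hmap, hvar, hball⟩ := h4 x hx
  exact ⟨L, hL, γ, hγ0, hγL, hmap, hvar, fun t ht =>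
    (ball_subset_ball (mul_le_mul_of_nonneg_right hle ht.1)).trans (hball t ht)⟩

theorem exists_johnPair {ϱ : ℝ} {Ω : Set (Euc d)} (h : IsJohnDomain ϱ Ω) :
    ∃ p, JohnPair ϱ Ω p := by
  obtain ⟨h1, h2, h3, p, hp, h4⟩ := h
  exact ⟨p, h1, h3, hp, h4⟩

/-! ### Arc-length parametrized curves -/

theorem evar_Icc {γ : ℝ → Euc d} {L : ℝ}
    (hvar : ∀ t ∈ Icc (0:ℝ) L, eVariationOn γ (Icc 0 t) = ENNReal.ofReal t)
    {a b : ℝ} (h0 : 0 ≤ a) (hab : a ≤ b) (hbL : b ≤ L) :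
    eVariationOn γ (Icc a b) = ENNReal.ofReal (b - a) := by
  have H := eVariationOn.Icc_add_Icc γ (s := univ) h0 hab (mem_univ a)
  simp only [univ_inter] at H
  rw [hvar a ⟨h0, hab.trans hbL⟩, hvar b ⟨h0.trans hab, hbL⟩] at H
  have ha : ENNReal.ofReal a ≠ ⊤ := ENNReal.ofReal_ne_top
  have : eVariationOn γ (Icc a b) = ENNReal.ofReal b - ENNReal.ofReal a := by
    rw [← H]; rw [ENNReal.add_sub_cancel_left ha]
  rw [this, ← ENNReal.ofReal_sub _ h0]

theorem dist_le_of_unit_speed {γ : ℝ → Euc d} {L : ℝ}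
    (hvar : ∀ t ∈ Icc (0:ℝ) L, eVariationOn γ (Icc 0 t) = ENNReal.ofReal t)
    {a b : ℝ} (h0 : 0 ≤ a) (hab : a ≤ b) (hbL : b ≤ L) :
    dist (γ a) (γ b) ≤ b - a := by
  have h1 : edist (γ a) (γ b) ≤ eVariationOn γ (Icc a b) :=
    eVariationOn.edist_le γ ⟨le_refl a, hab⟩ ⟨hab, le_refl b⟩
  rw [evar_Icc hvar h0 hab hbL, edist_dist] at h1
  have := (ENNReal.ofReal_le_ofReal_iff (by linarith)).mp h1
  linarith [this]

/-! ### Balls and `infDist` -/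

theorem ball_subset_of_le_infDist {S : Set (Euc d)} {z : Euc d} {r : ℝ}
    (h : r ≤ Metric.infDist z Sᶜ) : ball z r ⊆ S := by
  intro w hw
  by_contra hws
  have h1 : Metric.infDist z Sᶜ ≤ dist z w := Metric.infDist_le_dist_of_mem hws
  rw [dist_comm] at h1
  have : dist w z < r := mem_ball.mp hw
  linarith

theorem le_infDist_of_ball_subset {S : Set (Euc d)} {z : Euc d} {r : ℝ}
    (hS : Sᶜ.Nonempty) (h : ball z r ⊆ S) : r ≤ Metric.infDist z Sᶜ := by
  rcases le_or_gt r 0 with hr | hr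
  · exact hr.trans Metric.infDist_nonneg
  by_contra hc
  push_neg at hc
  obtain ⟨w, hw, hwd⟩ := (Metric.infDist_lt_iff hS).mp hc
  exact hw (h (mem_ball.mpr (by rwa [dist_comm])))

theorem coord_le_norm (v : Euc d) (i : Fin d) : |v i| ≤ ‖v‖ := by
  rw [EuclideanSpace.norm_eq]
  rw [← Real.sqrt_sq_eq_abs]
  apply Real.sqrt_le_sqrt
  have : v i ^ 2 = ‖v i‖ ^ 2 := by rw [Real.norm_eq_abs, sq_abs]
  rw [this]
  exact Finset.single_le_sum (f := fun j => ‖v j‖ ^ 2) (fun j _ => sq_nonneg _) (Finset.mem_univ i)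

theorem coord_dist_le (x y : Euc d) (i : Fin d) : |x i - y i| ≤ dist x y := by
  have := coord_le_norm (x - y) i
  simpa [dist_eq_norm] using this




variable {d : ℕ}

section Facts

variable {ϱ : ℝ} {D : Set (EuclideanSpace ℝ (Fin d))} {p : EuclideanSpace ℝ (Fin d)}

/-- The outer radius of `D` seen from `p`. -/
def jrad (D : Set (EuclideanSpace ℝ (Fin d))) (p : EuclideanSpace ℝ (Fin d)) : ℝ :=
  sSup ((fun x => dist x p) '' D)

theorem jrad_bddAbove (hb : Bornology.IsBounded D) :
    BddAbove ((fun x => dist x p) '' D) := by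
  obtain ⟨r, hr⟩ := hb.subset_closedBall p
  exact ⟨r, fun y ⟨x, hx, hxy⟩ => hxy ▸ mem_closedBall.mp (hr hx)⟩

theorem dist_le_jrad (hb : Bornology.IsBounded D) {x : EuclideanSpace ℝ (Fin d)} (hx : x ∈ D) :
    dist x p ≤ jrad D p :=
  le_csSup (jrad_bddAbove hb) ⟨x, hx, rfl⟩

theorem jrad_nonneg (hb : Bornology.IsBounded D) (hp : p ∈ D) : 0 ≤ jrad D p := by
  have := dist_le_jrad (p := p) hb hp
  simpa using this

theorem subset_closedBall_jrad (hb : Bornology.IsBounded D) :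
    D ⊆ closedBall p (jrad D p) := fun x hx => mem_closedBall.mpr (dist_le_jrad hb hx)

theorem jrad_pos (hd : 0 < d) (ho : IsOpen D) (hb : Bornology.IsBounded D) (hp : p ∈ D) :
    0 < jrad D p := by
  obtain ⟨ε, hε, hball⟩ := Metric.isOpen_iff.mp ho p hp
  set q : EuclideanSpace ℝ (Fin d) := p + EuclideanSpace.single ⟨0, hd⟩ (ε/2) with hq
  have hdq : dist q p = ε / 2 := by
    rw [hq, dist_eq_norm, add_sub_cancel_left, EuclideanSpace.norm_single]
    exact abs_of_pos (by linarith)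
  have hqD : q ∈ D := hball (mem_ball.mpr (by rw [hdq]; linarith))
  have h2 := dist_le_jrad (p := p) hb hqD
  rw [hdq] at h2
  linarith

/-- If a ball around `q` is inside a closed ball around `q`, the radii compare (in dimension
at least one). -/
theorem radius_le_of_ball_subset (hd : 0 < d) {q : EuclideanSpace ℝ (Fin d)} {ρ R : ℝ}
    (hR : 0 ≤ R) (h : ball q ρ ⊆ closedBall q R) : ρ ≤ R := by
  by_contra hc
  push_neg at hc
  set s := (R + ρ) / 2 with hs
  have hs0 : 0 ≤ s := by linarith
  set w : EuclideanSpace ℝ (Fin d) := q + EuclideanSpace.single ⟨0, hd⟩ s with hw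
  have hdw : dist w q = s := by
    rw [hw, dist_eq_norm, add_sub_cancel_left, EuclideanSpace.norm_single]
    exact abs_of_nonneg hs0
  have h1 : w ∈ ball q ρ := mem_ball.mpr (by rw [hdw]; linarith)
  have h2 := mem_closedBall.mp (h h1)
  rw [hdw] at h2
  linarith

theorem compl_nonempty (hd : 0 < d) (hb : Bornology.IsBounded D) : Dᶜ.Nonempty := by
  rcases D.eq_empty_or_nonempty with hD | ⟨p0, hp0⟩
  · rw [hD, compl_empty]
    exact univ_nonempty
  obtain ⟨r, hr⟩ := hb.subset_closedBall p0
  set q : EuclideanSpace ℝ (Fin d) := p0 + EuclideanSpace.single ⟨0, hd⟩ (|r| + 1) with hq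
  refine ⟨q, fun hqD => ?_⟩
  have h2 := mem_closedBall.mp (hr hqD)
  have hdq : dist q p0 = |r| + 1 := by
    rw [hq, dist_eq_norm, add_sub_cancel_left, EuclideanSpace.norm_single]
    exact abs_of_nonneg (by positivity)
  rw [hdq] at h2
  have : r ≤ |r| := le_abs_self r
  linarith

/-- Any point of a John domain is joined to the center by an arc-length curve
of length at most `R/ϱ`; this includes the center itself (constant curve). -/
theorem curve_from (hJ : JohnPair ϱ D p) (hϱ : 0 < ϱ) (hd : 0 < d)
    {x : EuclideanSpace ℝ (Fin d)} (hx : x ∈ D) :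
    ∃ L : ℝ, 0 ≤ L ∧ ϱ * L ≤ jrad D p ∧ ∃ γ : ℝ → EuclideanSpace ℝ (Fin d),
      γ 0 = x ∧ γ L = p ∧ MapsTo γ (Icc 0 L) D ∧
      (∀ t ∈ Icc (0:ℝ) L, eVariationOn γ (Icc 0 t) = ENNReal.ofReal t) ∧
      (∀ t ∈ Icc (0:ℝ) L, ball (γ t) (ϱ * t) ⊆ D) := by
  obtain ⟨ho, hb, hp, hcurv⟩ := hJ
  rcases eq_or_ne x p with hxp | hxp
  · refine ⟨0, le_refl 0, by simpa using jrad_nonneg hb hp, fun _ => x,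
      rfl, hxp, fun t _ => hx, ?_, ?_⟩
    · intro t ht
      have : t = 0 := le_antisymm ht.2 ht.1
      subst this
      rw [Set.Icc_self, eVariationOn.subsingleton _ (Set.subsingleton_singleton),
        ENNReal.ofReal_zero]
    · intro t ht
      have : t = 0 := le_antisymm ht.2 ht.1
      subst this
      rw [mul_zero, ball_zero]
      exact empty_subset _
  · obtain ⟨L, hL, γ, hγ0, hγL, hmap, hvar, hball⟩ := hcurv x ⟨hx, hxp⟩
    refine ⟨L, hL, ?_, γ, hγ0, hγL, hmap, hvar, hball⟩
    have h1 : ball p (ϱ * L) ⊆ D := hγL ▸ hball L ⟨hL, le_refl L⟩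
    exact radius_le_of_ball_subset hd (jrad_nonneg hb hp)
      (h1.trans (subset_closedBall_jrad hb))

/-- The central ball. -/
theorem ball_center_subset (hJ : JohnPair ϱ D p) (hϱ : 0 < ϱ) (hd : 0 < d) :
    ball p (ϱ * jrad D p) ⊆ D := by
  obtain ⟨ho, hb, hp, hcurv⟩ := hJ
  intro w hw
  have hw' : dist w p < ϱ * jrad D p := mem_ball.mp hw
  rcases eq_or_lt_of_le (dist_nonneg (x := w) (y := p)) with h0 | h0
  · rwa [dist_eq_zero.mp h0.symm]
  have hlt : dist w p / ϱ < jrad D p := (div_lt_iff₀ hϱ).mpr (by linarith [hw'])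
  obtain ⟨_, ⟨x, hxD, rfl⟩, hxgt⟩ :=
    exists_lt_of_lt_csSup (Set.Nonempty.image _ ⟨p, hp⟩) hlt
  change dist w p / ϱ < dist x p at hxgt
  have hxp : x ≠ p := by
    intro h
    rw [h, dist_self] at hxgt
    have : 0 ≤ dist w p / ϱ := div_nonneg dist_nonneg hϱ.le
    linarith
  obtain ⟨L, hL, γ, hγ0, hγL, hmap, hvar, hball⟩ := hcurv x ⟨hxD, hxp⟩
  have hLd : dist x p ≤ L := by
    have := dist_le_of_unit_speed hvar (le_refl 0) hL (le_refl L)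
    rw [hγ0, hγL] at this
    linarith
  have : w ∈ ball (γ L) (ϱ * L) := by
    rw [hγL, mem_ball]
    calc dist w p = ϱ * (dist w p / ϱ) := by field_simp
    _ < ϱ * dist x p := by
        apply mul_lt_mul_of_pos_left hxgt hϱ
    _ ≤ ϱ * L := mul_le_mul_of_nonneg_left hLd hϱ.le
  exact hball L ⟨hL, le_refl L⟩ this

/-- Corkscrew: near every point of `D` and at every scale up to `R` there is a
deep ball inside `D`. -/
theorem corkscrew (hJ : JohnPair ϱ D p) (hϱ : 0 < ϱ) (hd : 0 < d)
    {y : EuclideanSpace ℝ (Fin d)} (hy : y ∈ D) {a : ℝ} (ha : 0 < a) (haR : a ≤ jrad D p) :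
    ∃ z, dist z y ≤ a ∧ ball z (ϱ * a) ⊆ D := by
  obtain ⟨L, hL, hLR, γ, hγ0, hγL, hmap, hvar, hball⟩ := curve_from hJ hϱ hd hy
  rcases le_or_gt a L with haL | haL
  · refine ⟨γ a, ?_, hball a ⟨ha.le, haL⟩⟩
    have := dist_le_of_unit_speed hvar (le_refl 0) ha.le haL
    rw [hγ0, dist_comm] at this
    linarith
  · refine ⟨p, ?_, ?_⟩
    · have := dist_le_of_unit_speed hvar (le_refl 0) hL (le_refl L)
      rw [hγ0, hγL, dist_comm] at this
      linarith
    · exact (ball_subset_ball (mul_le_mul_of_nonneg_left haR hϱ.le)).trans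
        (ball_center_subset hJ hϱ hd)

end Facts




/-! ### Cubes -/

/-- A half-open axis-parallel cube with corner `c` and side `s`. -/
def cube (c : Fin d → ℝ) (s : ℝ) : Set (EuclideanSpace ℝ (Fin d)) :=
  {x | ∀ i, c i ≤ x i ∧ x i < c i + s}

theorem cube_eq_preimage (c : Fin d → ℝ) (s : ℝ) :
    cube c s = (MeasurableEquiv.toLp 2 (Fin d → ℝ)).symm ⁻¹'
      (Set.univ.pi fun i => Ico (c i) (c i + s)) := by
  ext x
  simp only [cube, mem_setOf_eq, mem_preimage, mem_pi, mem_univ, forall_true_left, mem_Ico]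
  rfl

theorem volume_cube (c : Fin d → ℝ) {s : ℝ} (hs : 0 ≤ s) :
    volume (cube c s) = (ENNReal.ofReal s) ^ d := by
  rw [cube_eq_preimage]
  rw [(EuclideanSpace.volume_preserving_symm_measurableEquiv_toLp (Fin d)).measure_preimage
    ((MeasurableSet.univ_pi fun i => measurableSet_Ico).nullMeasurableSet)]
  rw [volume_pi_pi]
  simp [Real.volume_Ico]

theorem cube_measurableSet (c : Fin d → ℝ) (s : ℝ) : MeasurableSet (cube c s) := by
  rw [cube_eq_preimage]
  exact (MeasurableSet.univ_pi fun i => measurableSet_Ico).preimage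
    (MeasurableEquiv.measurable _)

/-- Children cubes: corner shifted by `b * (s/m)`. -/
noncomputable def childCorner (c : Fin d → ℝ) (s : ℝ) (m : ℕ) (b : Fin d → Fin m) : Fin d → ℝ :=
  fun i => c i + (b i : ℝ) * (s / m)

theorem child_subset {c : Fin d → ℝ} {s : ℝ} (hs : 0 < s) {m : ℕ} (hm : 0 < m)
    (b : Fin d → Fin m) : cube (childCorner c s m b) (s / m) ⊆ cube c s := by
  intro x hx
  intro i
  obtain ⟨h1, h2⟩ := hx i
  have hsm : 0 < s / m := by positivity
  have hb0 : (0:ℝ) ≤ (b i : ℝ) := Nat.cast_nonneg _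
  have hbm : (b i : ℝ) + 1 ≤ m := by
    have := (b i).is_lt
    exact_mod_cast Nat.succ_le_of_lt this
  constructor
  · have : c i ≤ childCorner c s m b i := by
      simp only [childCorner]
      nlinarith
    linarith
  · have : childCorner c s m b i + s / m ≤ c i + s := by
      simp only [childCorner]
      have h3 : ((b i : ℝ) + 1) * (s / m) ≤ (m : ℝ) * (s / m) :=
        mul_le_mul_of_nonneg_right hbm hsm.le
      have h4 : (m:ℝ) * (s / m) = s := by
        field_simp
      nlinarith
    linarith

theorem exists_child_mem {c : Fin d → ℝ} {s : ℝ} (hs : 0 < s) {m : ℕ} (hm : 0 < m)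
    {x : EuclideanSpace ℝ (Fin d)} (hx : x ∈ cube c s) :
    ∃ b : Fin d → Fin m, x ∈ cube (childCorner c s m b) (s / m) := by
  have hsm : 0 < s / m := by positivity
  have key : ∀ i : Fin d, ∃ k : Fin m, childCorner c s m (fun _ => k) i ≤ x i ∧
      x i < childCorner c s m (fun _ => k) i + s / m := by
    intro i
    obtain ⟨h1, h2⟩ := hx i
    set y := x i - c i with hy
    have hy0 : 0 ≤ y := by simp [hy]; linarith
    have hys : y < s := by simp [hy]; linarith
    set k : ℤ := ⌊y / (s / m)⌋ with hk
    have hk0 : 0 ≤ k := Int.floor_nonneg.mpr (by positivity)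
    have hkm : k < m := by
      have : y / (s / m) < m := by
        rw [div_lt_iff₀ hsm]
        calc y < s := hys
        _ = (m:ℝ) * (s / m) := by field_simp
      exact_mod_cast (Int.floor_lt.mpr (by exact_mod_cast this))
    refine ⟨⟨k.toNat, by omega⟩, ?_, ?_⟩
    · have h3 : (k : ℝ) ≤ y / (s / m) := Int.floor_le _
      have h4 : (k : ℝ) * (s / m) ≤ y := by
        rw [← le_div_iff₀ hsm]; exact h3
      simp only [childCorner]
      have : ((⟨k.toNat, by omega⟩ : Fin m) : ℝ) = (k : ℝ) := by
        show ((k.toNat : ℕ) : ℝ) = (k : ℝ)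
        exact_mod_cast Int.toNat_of_nonneg hk0
      rw [this]
      linarith
    · have h3 : y / (s / m) < (k : ℝ) + 1 := Int.lt_floor_add_one _
      have h4 : y < ((k:ℝ) + 1) * (s / m) := by
        rw [← div_lt_iff₀ hsm]; exact h3
      simp only [childCorner]
      have : ((⟨k.toNat, by omega⟩ : Fin m) : ℝ) = (k : ℝ) := by
        show ((k.toNat : ℕ) : ℝ) = (k : ℝ)
        exact_mod_cast Int.toNat_of_nonneg hk0
      rw [this]
      linarith
  choose b hb using key
  refine ⟨b, fun i => ?_⟩
  have := hb i
  simpa [childCorner] using this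

theorem cube_subset_iUnion_children {c : Fin d → ℝ} {s : ℝ} (hs : 0 < s) {m : ℕ} (hm : 0 < m) :
    cube c s ⊆ ⋃ b : Fin d → Fin m, cube (childCorner c s m b) (s / m) := by
  intro x hx
  obtain ⟨b, hb⟩ := exists_child_mem hs hm hx
  exact mem_iUnion.mpr ⟨b, hb⟩

theorem cube_diam_le {c : Fin d → ℝ} {s : ℝ} (hs : 0 ≤ s)
    {x y : EuclideanSpace ℝ (Fin d)} (hx : x ∈ cube c s) (hy : y ∈ cube c s) :
    dist x y ≤ Real.sqrt d * s := by
  rw [dist_eq_norm, EuclideanSpace.norm_eq]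
  have hbound : ∀ i, ‖(x - y : EuclideanSpace ℝ (Fin d)) i‖ ^ 2 ≤ s ^ 2 := by
    intro i
    obtain ⟨hx1, hx2⟩ := hx i
    obtain ⟨hy1, hy2⟩ := hy i
    have hxy : |x i - y i| ≤ s := by
      rw [abs_le]; constructor <;> nlinarith
    have : ‖(x - y : EuclideanSpace ℝ (Fin d)) i‖ = |x i - y i| := by
      simp [Real.norm_eq_abs]
    rw [this]
    nlinarith [abs_nonneg (x i - y i)]
  calc Real.sqrt (∑ i, ‖(x - y : EuclideanSpace ℝ (Fin d)) i‖ ^ 2)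
      ≤ Real.sqrt (∑ _i : Fin d, s ^ 2) := by
        apply Real.sqrt_le_sqrt
        exact Finset.sum_le_sum fun i _ => hbound i
    _ = Real.sqrt (d * s ^ 2) := by
        rw [Finset.sum_const, Finset.card_univ, Fintype.card_fin, nsmul_eq_mul]
    _ = Real.sqrt d * s := by
        rw [Real.sqrt_mul (Nat.cast_nonneg d), Real.sqrt_sq hs]




theorem cube_mono {c : Fin d → ℝ} {s s' : ℝ} (h : s' ≤ s) : cube c s' ⊆ cube c s :=
  fun x hx i => ⟨(hx i).1, lt_of_lt_of_le (hx i).2 (by linarith)⟩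

theorem collar_induction
    (hd : 0 < d) {ϱ : ℝ} (hϱ0 : 0 < ϱ) (hϱ1 : ϱ ≤ 1)
    {D : Set (EuclideanSpace ℝ (Fin d))} {p : EuclideanSpace ℝ (Fin d)} {R : ℝ}
    (hDR : D ⊆ closedBall p R) (hR : 0 < R)
    (cork : ∀ y ∈ D, ∀ a : ℝ, 0 < a → a ≤ R → ∃ z, dist z y ≤ a ∧ ball z (ϱ * a) ⊆ D)
    (hDc : Dᶜ.Nonempty)
    {t : ℝ} (ht : 0 < t)
    {m : ℕ} (hm4 : 4 ∣ m) (hm2 : 2 ≤ m) (hm1 : Real.sqrt d * 32 ≤ ϱ * m) :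
    ∀ n : ℕ, ∀ s : ℝ, 0 < s → s ≤ 3 * R → 32 * t * (m : ℝ) ^ n ≤ ϱ * s →
      ∀ c : Fin d → ℝ,
        volume ({z ∈ D | Metric.infDist z Dᶜ < t} ∩ cube c s) * ((m ^ d : ℕ) : ℝ≥0∞) ^ n ≤
          ((m ^ d - 1 : ℕ) : ℝ≥0∞) ^ n * (ENNReal.ofReal s) ^ d := by
  have hm0 : 0 < m := by omega
  set N := {z ∈ D | Metric.infDist z Dᶜ < t} with hN
  intro n
  induction n with
  | zero =>
    intro s hs0 hs3 hts c
    simpa using (measure_mono inter_subset_right).trans (volume_cube c hs0.le).le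
  | succ n ih =>
    intro s hs0 hs3 hts c
    have hmR : (1:ℝ) ≤ (m:ℝ) := by exact_mod_cast hm0
    have hmpow : (1:ℝ) ≤ (m:ℝ) ^ (n+1) := one_le_pow₀ hmR
    have h32 : 32 * t ≤ ϱ * s := by nlinarith
    have hsm0 : 0 < s / m := by positivity
    -- a good (collar-free) child exists
    obtain ⟨b0, hb0⟩ : ∃ b0 : Fin d → Fin m,
        N ∩ cube (childCorner c s m b0) (s / m) = ∅ := by
      by_cases hinner : (N ∩ cube (fun i => c i + s/4) (s/2)).Nonempty
      · -- deep case : corkscrew ball inside the cube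
        obtain ⟨y, hyN, hyI⟩ := hinner
        have hyD : y ∈ D := hyN.1
        obtain ⟨z, hzy, hzball⟩ := cork y hyD (s/16) (by positivity) (by linarith)
        have hzQ : z ∈ cube c s := by
          intro i
          have h1 := (hyI i).1
          have h2 := (hyI i).2
          have h3 : |z i - y i| ≤ s/16 := (coord_dist_le z y i).trans hzy
          rw [abs_le] at h3
          constructor <;> [linarith [h3.1]; linarith [h3.2]]
        obtain ⟨b0, hb0z⟩ := exists_child_mem hs0 hm0 hzQ
        refine ⟨b0, eq_empty_iff_forall_notMem.mpr fun w hw => ?_⟩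
        obtain ⟨hwN, hwc⟩ := hw
        have hdwz : dist w z ≤ Real.sqrt d * (s/m) := cube_diam_le hsm0.le hwc hb0z
        have hsd : Real.sqrt d * (s/m) ≤ ϱ * s / 32 := by
          have h : Real.sqrt d * 32 * (s/m) ≤ ϱ * m * (s/m) :=
            mul_le_mul_of_nonneg_right hm1 hsm0.le
          have h2 : ϱ * (m:ℝ) * (s/m) = ϱ * s := by field_simp
          rw [h2] at h
          ring_nf at h ⊢
          linarith
        have hsub : ball w (ϱ * s / 32) ⊆ D := by
          refine (ball_subset_ball' ?_).trans hzball
          calc ϱ * s / 32 + dist w z ≤ ϱ * s/32 + ϱ * s/32 := by linarith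
          _ = ϱ * (s/16) := by ring
        have hinf : ϱ * s / 32 ≤ Metric.infDist w Dᶜ := le_infDist_of_ball_subset hDc hsub
        have hwt : Metric.infDist w Dᶜ < t := hwN.2
        have : t ≤ ϱ * s / 32 := by linarith
        linarith
      · -- shallow case : the middle child is collar-free
        obtain ⟨k, hk⟩ := hm4
        have hk0 : 0 < k := by omega
        refine ⟨fun _ => ⟨m/4, by omega⟩, ?_⟩
        rw [eq_empty_iff_forall_notMem]
        intro w hw
        apply hinner
        refine ⟨w, hw.1, ?_⟩
        have hcorner : ∀ i, childCorner c s m (fun _ => ⟨m/4, by omega⟩) i = c i + s/4 := by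
          intro i
          simp only [childCorner]
          have : ((m/4 : ℕ) : ℝ) = k := by rw [hk]; norm_num [Nat.mul_div_cancel_left k]
          rw [this, hk]
          have hkR : (0:ℝ) < k := by exact_mod_cast hk0
          push_cast
          field_simp
        have := hw.2
        intro i
        have hws := this i
        rw [hcorner i] at hws
        have hsm2 : s / m ≤ s / 2 := by
          apply div_le_div_of_nonneg_left hs0.le (by norm_num)
          exact_mod_cast hm2
        exact ⟨hws.1, lt_of_lt_of_le hws.2 (by linarith)⟩
    -- now sum over the other children
    have hcover : N ∩ cube c s ⊆
        ⋃ b ∈ (Finset.univ.erase b0 : Finset (Fin d → Fin m)),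
          (N ∩ cube (childCorner c s m b) (s / m)) := by
      rintro w ⟨hwN, hwc⟩
      obtain ⟨b, hb⟩ := exists_child_mem hs0 hm0 hwc
      have hbne : b ≠ b0 := by
        rintro rfl
        exact absurd ⟨hwN, hb⟩ (eq_empty_iff_forall_notMem.mp hb0 w)
      exact mem_biUnion (Finset.mem_erase.mpr ⟨hbne, Finset.mem_univ b⟩) ⟨hwN, hb⟩
    have hvol : volume (N ∩ cube c s) ≤
        ∑ b ∈ (Finset.univ.erase b0 : Finset (Fin d → Fin m)),
          volume (N ∩ cube (childCorner c s m b) (s / m)) :=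
      (measure_mono hcover).trans (measure_biUnion_finset_le _ _)
    have hcard : (Finset.univ.erase b0 : Finset (Fin d → Fin m)).card = m ^ d - 1 := by
      rw [Finset.card_erase_of_mem (Finset.mem_univ b0), Finset.card_univ]
      congr 1
      rw [Fintype.card_fun]
      simp
    have hih : ∀ b : Fin d → Fin m,
        volume (N ∩ cube (childCorner c s m b) (s / m)) * ((m ^ d : ℕ) : ℝ≥0∞) ^ n ≤
          ((m ^ d - 1 : ℕ) : ℝ≥0∞) ^ n * (ENNReal.ofReal (s/m)) ^ d := by
      intro b
      have hA : s / m ≤ 3 * R := le_trans (div_le_self hs0.le hmR) hs3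
      have hB : 32 * t * (m:ℝ) ^ n ≤ ϱ * (s / m) := by
        rw [← mul_div_assoc, le_div_iff₀ (by positivity : (0:ℝ) < (m:ℝ))]
        calc 32 * t * (m:ℝ)^n * m = 32 * t * (m:ℝ)^(n+1) := by ring
        _ ≤ ϱ * s := hts
      exact ih (s/m) hsm0 hA hB _
    -- put everything together
    have hMeq : ((m ^ d : ℕ) : ℝ≥0∞) * (ENNReal.ofReal (s/m)) ^ d = (ENNReal.ofReal s) ^ d := by
      have h1 : ((m ^ d : ℕ) : ℝ≥0∞) = (ENNReal.ofReal (m:ℝ)) ^ d := by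
        rw [ENNReal.ofReal_natCast]
        push_cast
        rfl
      rw [h1, ← mul_pow, ← ENNReal.ofReal_mul (by positivity : (0:ℝ) ≤ (m:ℝ))]
      congr 2
      field_simp
    calc volume (N ∩ cube c s) * ((m ^ d : ℕ) : ℝ≥0∞) ^ (n+1)
        ≤ (∑ b ∈ (Finset.univ.erase b0 : Finset (Fin d → Fin m)),
            volume (N ∩ cube (childCorner c s m b) (s / m))) * ((m ^ d : ℕ) : ℝ≥0∞) ^ (n+1) :=
          mul_le_mul_left hvol _
      _ = (∑ b ∈ (Finset.univ.erase b0 : Finset (Fin d → Fin m)),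
            volume (N ∩ cube (childCorner c s m b) (s / m)) * ((m ^ d : ℕ) : ℝ≥0∞) ^ n) *
            ((m ^ d : ℕ) : ℝ≥0∞) := by
          rw [Finset.sum_mul, Finset.sum_mul]
          congr 1
          ext b
          rw [pow_succ]
          ring
      _ ≤ (∑ _b ∈ (Finset.univ.erase b0 : Finset (Fin d → Fin m)),
            ((m ^ d - 1 : ℕ) : ℝ≥0∞) ^ n * (ENNReal.ofReal (s/m)) ^ d) *
            ((m ^ d : ℕ) : ℝ≥0∞) :=
          mul_le_mul_left (Finset.sum_le_sum fun b _ => hih b) _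
      _ = ((m ^ d - 1 : ℕ) : ℝ≥0∞) ^ (n+1) * (((m ^ d : ℕ) : ℝ≥0∞) * (ENNReal.ofReal (s/m)) ^ d) := by
          rw [Finset.sum_const, hcard, nsmul_eq_mul, pow_succ]
          push_cast
          ring
      _ = ((m ^ d - 1 : ℕ) : ℝ≥0∞) ^ (n+1) * (ENNReal.ofReal s) ^ d := by rw [hMeq]




theorem collar_volume
    (hd : 0 < d) {ϱ : ℝ} (hϱ0 : 0 < ϱ) (hϱ1 : ϱ ≤ 1)
    {D : Set (EuclideanSpace ℝ (Fin d))} {p : EuclideanSpace ℝ (Fin d)} {R : ℝ}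
    (hDR : D ⊆ closedBall p R) (hR : 0 < R)
    (cork : ∀ y ∈ D, ∀ a : ℝ, 0 < a → a ≤ R → ∃ z, dist z y ≤ a ∧ ball z (ϱ * a) ⊆ D)
    (hDc : Dᶜ.Nonempty)
    {m : ℕ} (hm4 : 4 ∣ m) (hm2 : 2 ≤ m) (hm1 : Real.sqrt d * 32 ≤ ϱ * m) (K : ℕ) :
    volume {z ∈ D | Metric.infDist z Dᶜ < 3 * ϱ * R / (32 * (m:ℝ) ^ K)} *
        ((m ^ d : ℕ) : ℝ≥0∞) ^ K ≤
      ((m ^ d - 1 : ℕ) : ℝ≥0∞) ^ K * (ENNReal.ofReal (3 * R)) ^ d := by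
  have hm0 : 0 < m := by omega
  have hmK : (0:ℝ) < (m:ℝ) ^ K := by positivity
  set t := 3 * ϱ * R / (32 * (m:ℝ) ^ K) with hts
  have ht : 0 < t := by positivity
  set N := {z ∈ D | Metric.infDist z Dᶜ < t} with hN
  have hsub : N ⊆ cube (fun i => p i - 3 * R / 2) (3 * R) := by
    intro x hx
    have hxd : dist x p ≤ R := mem_closedBall.mp (hDR hx.1)
    intro i
    have := (coord_dist_le x p i).trans hxd
    rw [abs_le] at this
    constructor
    · simp only; linarith [this.1]
    · simp only; linarith [this.2]
  have heq : N = N ∩ cube (fun i => p i - 3 * R / 2) (3 * R) :=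
    (inter_eq_self_of_subset_left hsub).symm
  rw [heq]
  apply collar_induction hd hϱ0 hϱ1 hDR hR cork hDc ht hm4 hm2 hm1 K (3 * R)
    (by linarith) (le_refl _)
  have : 32 * t * (m:ℝ) ^ K = 3 * ϱ * R := by
    rw [hts]; field_simp
  rw [this]
  calc 3 * ϱ * R = ϱ * (3 * R) := by ring
  _ ≤ ϱ * (3 * R) := le_refl _

theorem exists_deep_point
    (hd : 0 < d) {ϱ c₀ : ℝ} (hϱ0 : 0 < ϱ) (hϱ1 : ϱ ≤ 1) (hc₀ : 0 < c₀)
    {m K : ℕ} (hm4 : 4 ∣ m) (hm2 : 2 ≤ m) (hm1 : Real.sqrt d * 32 ≤ ϱ * m)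
    (hK : ((m ^ d - 1 : ℕ) : ℝ) ^ K * (3:ℝ) ^ d * c₀ <
      ((m ^ d : ℕ) : ℝ) ^ K * (ϱ ^ d *
        (volume (ball (0 : EuclideanSpace ℝ (Fin d)) 1)).toReal))
    {D : Set (EuclideanSpace ℝ (Fin d))} {p : EuclideanSpace ℝ (Fin d)}
    (hJ : JohnPair ϱ D p)
    {S : Set (EuclideanSpace ℝ (Fin d))} (hS : S ⊆ D)
    (hvol : volume D ≤ ENNReal.ofReal c₀ * volume S) :
    ∃ y ∈ S, 3 * ϱ * jrad D p / (32 * (m:ℝ) ^ K) ≤ Metric.infDist y Dᶜ := by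
  obtain ⟨ho, hb, hp, -⟩ := id hJ
  set R := jrad D p with hRdef
  have hR : 0 < R := jrad_pos hd ho hb hp
  have hm0 : 0 < m := by omega
  set t := 3 * ϱ * R / (32 * (m:ℝ) ^ K) with htdef
  have ht : 0 < t := by positivity
  by_contra hcon
  push_neg at hcon
  -- then S is contained in the collar
  have hSN : S ⊆ {z ∈ D | Metric.infDist z Dᶜ < t} := fun y hy => ⟨hS hy, hcon y hy⟩
  set N := {z ∈ D | Metric.infDist z Dᶜ < t} with hN
  set v := volume (ball (0 : EuclideanSpace ℝ (Fin d)) 1) with hv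
  have hvne : v ≠ ⊤ := by rw [hv]; exact measure_ball_lt_top.ne
  -- lower bound for the volume of D
  have hballD : ball p (ϱ * R) ⊆ D := ball_center_subset hJ hϱ0 hd
  have hvolD : ENNReal.ofReal ((ϱ * R) ^ d) * v ≤ volume D := by
    have h1 : volume (ball p (ϱ * R)) ≤ volume D := measure_mono hballD
    rwa [Measure.addHaar_ball_of_pos volume p (by positivity : (0:ℝ) < ϱ * R),
      finrank_euclideanSpace_fin] at h1
  -- upper bound through the collar
  have hcollar := collar_volume hd hϱ0 hϱ1 (subset_closedBall_jrad hb) hR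
    (fun y hy a ha haR => corkscrew hJ hϱ0 hd hy ha haR) (compl_nonempty hd hb)
    hm4 hm2 hm1 K
  have chain : ENNReal.ofReal ((ϱ * R) ^ d) * v * ((m ^ d : ℕ) : ℝ≥0∞) ^ K ≤
      ENNReal.ofReal c₀ * (((m ^ d - 1 : ℕ) : ℝ≥0∞) ^ K * (ENNReal.ofReal (3 * R)) ^ d) := by
    calc ENNReal.ofReal ((ϱ * R) ^ d) * v * ((m ^ d : ℕ) : ℝ≥0∞) ^ K ≤ volume D * ((m ^ d : ℕ) : ℝ≥0∞) ^ K :=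
          mul_le_mul_left hvolD _
    _ ≤ ENNReal.ofReal c₀ * volume S * ((m ^ d : ℕ) : ℝ≥0∞) ^ K := mul_le_mul_left hvol _
    _ ≤ ENNReal.ofReal c₀ * volume N * ((m ^ d : ℕ) : ℝ≥0∞) ^ K :=
          mul_le_mul_left (mul_le_mul_right (measure_mono hSN) _) _
    _ = ENNReal.ofReal c₀ * (volume N * ((m ^ d : ℕ) : ℝ≥0∞) ^ K) := by ring
    _ ≤ ENNReal.ofReal c₀ * (((m ^ d - 1 : ℕ) : ℝ≥0∞) ^ K * (ENNReal.ofReal (3 * R)) ^ d) :=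
          mul_le_mul_right hcollar _
  -- pass to real numbers
  have hRHSne : ENNReal.ofReal c₀ * (((m ^ d - 1 : ℕ) : ℝ≥0∞) ^ K *
      (ENNReal.ofReal (3 * R)) ^ d) ≠ ⊤ := by
    apply ENNReal.mul_ne_top ENNReal.ofReal_ne_top
    apply ENNReal.mul_ne_top
    · exact (ENNReal.pow_ne_top (ENNReal.natCast_ne_top _))
    · exact (ENNReal.pow_ne_top ENNReal.ofReal_ne_top)
  have hreal := ENNReal.toReal_mono hRHSne chain
  have e1 : (ENNReal.ofReal ((ϱ * R) ^ d)).toReal = (ϱ * R) ^ d :=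
    ENNReal.toReal_ofReal (by positivity)
  have e2 : (ENNReal.ofReal c₀).toReal = c₀ := ENNReal.toReal_ofReal hc₀.le
  have e3 : (ENNReal.ofReal (3 * R)).toReal = 3 * R :=
    ENNReal.toReal_ofReal (by positivity)
  simp only [ENNReal.toReal_mul, ENNReal.toReal_pow, ENNReal.toReal_natCast, e1, e2, e3] at hreal
  -- contradiction with the choice of K
  have hstrict : c₀ * (((m ^ d - 1 : ℕ) : ℝ) ^ K * (3 * R) ^ d) <
      (ϱ * R) ^ d * v.toReal * ((m ^ d : ℕ) : ℝ) ^ K := by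
    have h1 := mul_lt_mul_of_pos_right hK (pow_pos hR d)
    calc c₀ * (((m ^ d - 1 : ℕ) : ℝ) ^ K * (3 * R) ^ d)
        = ((m ^ d - 1 : ℕ) : ℝ) ^ K * 3 ^ d * c₀ * R ^ d := by
          rw [mul_pow]; ring
    _ < ((m ^ d : ℕ) : ℝ) ^ K * (ϱ ^ d * v.toReal) * R ^ d := h1
    _ = (ϱ * R) ^ d * v.toReal * ((m ^ d : ℕ) : ℝ) ^ K := by
          rw [mul_pow]; ring
  ring_nf at hreal hstrict
  linarith



theorem concat_var
    {γ₁ γ₂ γ₃ Γ : ℝ → EuclideanSpace ℝ (Fin d)} {L₁ L₂ L₃ : ℝ}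
    (h1 : 0 ≤ L₁) (h2 : 0 ≤ L₂) (h3 : 0 ≤ L₃)
    (v1 : ∀ t ∈ Icc (0:ℝ) L₁, eVariationOn γ₁ (Icc 0 t) = ENNReal.ofReal t)
    (v2 : ∀ t ∈ Icc (0:ℝ) L₂, eVariationOn γ₂ (Icc 0 t) = ENNReal.ofReal t)
    (v3 : ∀ t ∈ Icc (0:ℝ) L₃, eVariationOn γ₃ (Icc 0 t) = ENNReal.ofReal t)
    (j12 : γ₁ L₁ = γ₂ L₂) (j23 : γ₂ 0 = γ₃ 0)
    (hΓ : ∀ t, Γ t = if t ≤ L₁ then γ₁ t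
      else if t ≤ L₁ + L₂ then γ₂ (L₁ + L₂ - t) else γ₃ (t - (L₁ + L₂))) :
    ∀ t ∈ Icc (0:ℝ) (L₁ + L₂ + L₃), eVariationOn Γ (Icc 0 t) = ENNReal.ofReal t := by
  have E1 : EqOn Γ γ₁ (Icc 0 L₁) := by
    intro u hu
    rw [hΓ u, if_pos hu.2]
  have E2 : EqOn Γ (fun u => γ₂ (L₁ + L₂ - u)) (Icc L₁ (L₁ + L₂)) := by
    intro u hu
    rw [hΓ u]
    rcases le_or_gt u L₁ with h | h
    · have hu1 : u = L₁ := le_antisymm h hu.1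
      rw [if_pos h, hu1]
      simp only [add_sub_cancel_left]
      exact j12
    · rw [if_neg (not_le.mpr h), if_pos hu.2]
  have E3 : EqOn Γ (fun u => γ₃ (u - (L₁ + L₂))) (Icc (L₁ + L₂) (L₁ + L₂ + L₃)) := by
    intro u hu
    show Γ u = γ₃ (u - (L₁ + L₂))
    rw [hΓ u]
    rcases le_or_gt u L₁ with h | h
    · have hL2 : L₂ = 0 := le_antisymm (by linarith [hu.1]) h2
      have hu1 : u = L₁ := le_antisymm h (by linarith [hu.1])
      rw [if_pos h, hu1]
      calc γ₁ L₁ = γ₂ L₂ := j12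
      _ = γ₂ 0 := by rw [hL2]
      _ = γ₃ 0 := j23
      _ = γ₃ (L₁ - (L₁ + L₂)) := by rw [hL2]; norm_num
    · rcases le_or_gt u (L₁ + L₂) with h' | h'
      · have hu2 : u = L₁ + L₂ := le_antisymm h' hu.1
        rw [if_neg (not_le.mpr h), if_pos h', hu2]
        simp only [sub_self]
        exact j23
      · rw [if_neg (not_le.mpr h), if_neg (not_le.mpr h')]
  have var1 : ∀ t ∈ Icc (0:ℝ) L₁, eVariationOn Γ (Icc 0 t) = ENNReal.ofReal t := by
    intro t ht
    rw [eVariationOn.eq_of_eqOn (E1.mono (Icc_subset_Icc_right ht.2))]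
    exact v1 t ht
  have var2 : ∀ t ∈ Icc L₁ (L₁ + L₂), eVariationOn Γ (Icc L₁ t) = ENNReal.ofReal (t - L₁) := by
    intro t ht
    have hanti : AntitoneOn (fun u => L₁ + L₂ - u) (Icc L₁ t) := by
      intro a _ b _ hab
      simp only
      linarith
    have himg : (fun u => L₁ + L₂ - u) '' Icc L₁ t = Icc (L₁ + L₂ - t) L₂ := by
      rw [show Icc (L₁ + L₂ - t) L₂ = Icc (L₁ + L₂ - t) (L₁ + L₂ - L₁) by congr 1; ring]
      exact Set.image_const_sub_Icc (L₁ + L₂) L₁ t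
    have key : eVariationOn (γ₂ ∘ (fun u => L₁ + L₂ - u)) (Icc L₁ t) =
        ENNReal.ofReal (t - L₁) := by
      rw [eVariationOn.comp_eq_of_antitoneOn γ₂ _ hanti, himg,
        evar_Icc v2 (by linarith [ht.2]) (by linarith [ht.1]) (le_refl L₂)]
      congr 1
      ring
    calc eVariationOn Γ (Icc L₁ t)
        = eVariationOn (γ₂ ∘ (fun u => L₁ + L₂ - u)) (Icc L₁ t) :=
          eVariationOn.eq_of_eqOn (E2.mono (Icc_subset_Icc_right ht.2))
    _ = ENNReal.ofReal (t - L₁) := key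
  have var3 : ∀ t ∈ Icc (L₁ + L₂) (L₁ + L₂ + L₃),
      eVariationOn Γ (Icc (L₁ + L₂) t) = ENNReal.ofReal (t - (L₁ + L₂)) := by
    intro t ht
    have hmono : MonotoneOn (fun u => u - (L₁ + L₂)) (Icc (L₁ + L₂) t) := by
      intro a _ b _ hab
      simp only
      linarith
    have himg : (fun u => u - (L₁ + L₂)) '' Icc (L₁ + L₂) t = Icc 0 (t - (L₁ + L₂)) := by
      rw [show Icc (0:ℝ) (t - (L₁ + L₂)) = Icc (L₁ + L₂ - (L₁ + L₂)) (t - (L₁ + L₂)) by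
        congr 1; ring]
      exact Set.image_sub_const_Icc (L₁ + L₂) (L₁ + L₂) t
    have key : eVariationOn (γ₃ ∘ (fun u => u - (L₁ + L₂))) (Icc (L₁ + L₂) t) =
        ENNReal.ofReal (t - (L₁ + L₂)) := by
      rw [eVariationOn.comp_eq_of_monotoneOn γ₃ _ hmono, himg,
        evar_Icc v3 (le_refl 0) (by linarith [ht.1]) (by linarith [ht.2])]
      congr 1
      ring
    calc eVariationOn Γ (Icc (L₁ + L₂) t)
        = eVariationOn (γ₃ ∘ (fun u => u - (L₁ + L₂))) (Icc (L₁ + L₂) t) :=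
          eVariationOn.eq_of_eqOn (E3.mono (Icc_subset_Icc_right ht.2))
    _ = ENNReal.ofReal (t - (L₁ + L₂)) := key
  -- gluing
  have glue : ∀ a b c : ℝ, a ≤ b → b ≤ c →
      eVariationOn Γ (Icc a b) + eVariationOn Γ (Icc b c) = eVariationOn Γ (Icc a c) := by
    intro a b c hab hbc
    have := eVariationOn.Icc_add_Icc Γ (s := univ) hab hbc (mem_univ b)
    simpa using this
  intro t ht
  rcases le_or_gt t L₁ with hb1 | hb1
  · exact var1 t ⟨ht.1, hb1⟩
  rcases le_or_gt t (L₁ + L₂) with hb2 | hb2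
  · rw [← glue 0 L₁ t h1 hb1.le, var1 L₁ ⟨h1, le_refl _⟩, var2 t ⟨hb1.le, hb2⟩,
      ← ENNReal.ofReal_add h1 (by linarith)]
    congr 1
    ring
  · have hmid : eVariationOn Γ (Icc 0 (L₁ + L₂)) = ENNReal.ofReal (L₁ + L₂) := by
      rw [← glue 0 L₁ (L₁ + L₂) h1 (by linarith), var1 L₁ ⟨h1, le_refl _⟩,
        var2 (L₁ + L₂) ⟨by linarith, le_refl _⟩, ← ENNReal.ofReal_add h1 (by linarith)]
      congr 1
      ring
    rw [← glue 0 (L₁ + L₂) t (by linarith) hb2.le, hmid, var3 t ⟨hb2.le, ht.2⟩,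
      ← ENNReal.ofReal_add (by linarith) (by linarith)]
    congr 1
    ring


theorem arith_piece {ϱ₁ cst Rj t u I : ℝ} (hϱ₁0 : 0 < ϱ₁) (hϱ₁1 : ϱ₁ ≤ 1)
    (hcst0 : 0 < cst) (hcst1 : cst ≤ 1) (hRj : 0 < Rj)
    (hu0 : 0 ≤ u) (ht0 : 0 ≤ t)
    (hts : ϱ₁ * t ≤ 2 * Rj + ϱ₁ * u)
    (hI1 : ϱ₁ * u ≤ I) (hI2 : cst * Rj - u ≤ I) :
    ϱ₁ ^ 2 * cst ^ 2 / 100 * t ≤ I := by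
  rcases le_or_gt (cst * Rj / 2) u with hcase | hcase
  · refine le_trans ?_ hI1
    have h1 : cst * Rj ≤ 2 * u := by linarith
    nlinarith [mul_le_mul_of_nonneg_left hts (by positivity : (0:ℝ) ≤ ϱ₁ * cst ^ 2 / 100),
      mul_le_mul_of_nonneg_left h1 (by positivity : (0:ℝ) ≤ ϱ₁ ^ 2 * cst / 50),
      mul_le_mul_of_nonneg_right (mul_le_one₀ hϱ₁1 hcst0.le hcst1)
        (mul_nonneg (mul_nonneg hϱ₁0.le hcst0.le) hu0),
      mul_nonneg (mul_nonneg hϱ₁0.le hϱ₁0.le) hu0]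
  · refine le_trans ?_ hI2
    have h2 : cst * Rj / 2 ≤ cst * Rj - u := by linarith
    nlinarith [mul_le_mul_of_nonneg_left hts (by positivity : (0:ℝ) ≤ ϱ₁ * cst ^ 2 / 100),
      mul_le_mul_of_nonneg_right (mul_le_one₀ hϱ₁1 hcst0.le hcst1)
        (mul_nonneg hcst0.le hRj.le),
      mul_nonneg (mul_nonneg hϱ₁0.le hcst0.le) hu0,
      mul_pos hcst0 hRj]



end JohnUnion


end

set_option maxHeartbeats 2000000 in
open JohnUnion in
/-- **Lemma (union of a sequence of John domains).** For `ϱ, c₀ > 0` there is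
`ϱ' = ϱ'(ϱ, c₀) > 0` such that if `D₀, D₁, D₂, …` is a sequence of `ϱ`-John domains in
`ℝ^d` with `|D_j| ≤ c₀ |D₀ ∩ D_j|` for all `j ≥ 1`, then `⋃_{j ≥ 0} D_j` is a `ϱ'`-John
domain. -/
theorem john_domain_iUnion (d : ℕ) (ϱ c₀ : ℝ) (hϱ : 0 < ϱ) (hc : 0 < c₀) :
    ∃ ϱ' : ℝ, 0 < ϱ' ∧
      ∀ D : ℕ → Set (EuclideanSpace ℝ (Fin d)),
        (∀ j, IsJohnDomain ϱ (D j)) →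
        (∀ j : ℕ, 1 ≤ j → volume (D j) ≤ ENNReal.ofReal c₀ * volume (D 0 ∩ D j)) →
        IsJohnDomain ϱ' (⋃ j, D j) := by
  
  rcases Nat.eq_zero_or_pos d with hd0 | hd
  · -- dimension 0 : the whole space is a single point
    subst hd0
    refine ⟨1, one_pos, fun D hD _ => ?_⟩
    have hsub : ∀ x y : EuclideanSpace ℝ (Fin 0), x = y := fun x y =>
      PiLp.ext fun i => i.elim0
    obtain ⟨p, hJP⟩ := exists_johnPair (hD 0)
    have hpΩ : p ∈ ⋃ j, D j := mem_iUnion.mpr ⟨0, hJP.2.2.1⟩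
    have hΩeq : (⋃ j, D j) = {p} := by
      ext z
      simp only [mem_singleton_iff]
      constructor
      · intro _; exact hsub z p
      · intro h; rw [h]; exact hpΩ
    refine ⟨isOpen_iUnion fun j => (hD j).1, ?_, ?_, p, hpΩ, ?_⟩
    · rw [hΩeq]; exact isConnected_singleton
    · rw [hΩeq]; exact Bornology.isBounded_singleton
    · intro x hx
      exact absurd (hsub x p) hx.2
  -- main case : d ≥ 1
  set ϱ₁ := min ϱ 1 with hϱ₁def
  have hϱ₁0 : 0 < ϱ₁ := lt_min hϱ one_pos
  have hϱ₁1 : ϱ₁ ≤ 1 := min_le_right _ _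
  -- the subdivision parameter m
  set m := 4 * (⌈Real.sqrt d * 8 / ϱ₁⌉₊ + 1) with hmdef
  have hm4 : 4 ∣ m := ⟨_, rfl⟩
  have hm2 : 2 ≤ m := by
    have : 1 ≤ ⌈Real.sqrt d * 8 / ϱ₁⌉₊ + 1 := by omega
    omega
  have hm0 : 0 < m := by omega
  have hm1 : Real.sqrt d * 32 ≤ ϱ₁ * m := by
    have h1 : Real.sqrt d * 8 / ϱ₁ ≤ (⌈Real.sqrt d * 8 / ϱ₁⌉₊ + 1 : ℝ) := by
      have := Nat.le_ceil (Real.sqrt d * 8 / ϱ₁)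
      push_cast
      linarith
    have h2 : Real.sqrt d * 8 ≤ ϱ₁ * (⌈Real.sqrt d * 8 / ϱ₁⌉₊ + 1 : ℝ) := by
      rw [div_le_iff₀ hϱ₁0] at h1
      linarith
    have h3 : ((m : ℝ)) = 4 * ((⌈Real.sqrt d * 8 / ϱ₁⌉₊ : ℝ) + 1) := by
      rw [hmdef]; push_cast; ring
    rw [h3]
    nlinarith
  -- the unit-ball volume
  set v := volume (ball (0 : EuclideanSpace ℝ (Fin d)) 1) with hvdef
  have hvne : v ≠ ⊤ := by rw [hvdef]; exact measure_ball_lt_top.ne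
  have hv0 : 0 < v.toReal := ENNReal.toReal_pos
    (by rw [hvdef]; exact (measure_ball_pos volume _ one_pos).ne') hvne
  -- choose the number of iterations K
  have hmd1 : 1 ≤ m ^ d := Nat.one_le_pow _ _ hm0
  have hqlt : ((m ^ d - 1 : ℕ) : ℝ) / ((m ^ d : ℕ) : ℝ) < 1 := by
    rw [div_lt_one (by exact_mod_cast Nat.pos_of_ne_zero (by positivity))]
    exact_mod_cast Nat.sub_lt (by omega) one_pos
  have hq0 : 0 ≤ ((m ^ d - 1 : ℕ) : ℝ) / ((m ^ d : ℕ) : ℝ) := by positivity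
  obtain ⟨K, hKlt⟩ := exists_pow_lt_of_lt_one
    (show (0:ℝ) < ϱ₁ ^ d * v.toReal / ((3:ℝ) ^ d * c₀) by positivity) hqlt
  have hK : ((m ^ d - 1 : ℕ) : ℝ) ^ K * (3:ℝ) ^ d * c₀ <
      ((m ^ d : ℕ) : ℝ) ^ K * (ϱ₁ ^ d * v.toReal) := by
    have hMpos : (0:ℝ) < ((m ^ d : ℕ) : ℝ) ^ K := by positivity
    rw [div_pow] at hKlt
    rw [div_lt_div_iff₀ hMpos (by positivity : (0:ℝ) < (3:ℝ) ^ d * c₀)] at hKlt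
    calc ((m ^ d - 1 : ℕ) : ℝ) ^ K * (3:ℝ) ^ d * c₀
        = ((m ^ d - 1 : ℕ) : ℝ) ^ K * ((3:ℝ) ^ d * c₀) := by ring
    _ < ϱ₁ ^ d * v.toReal * ((m ^ d : ℕ) : ℝ) ^ K := hKlt
    _ = ((m ^ d : ℕ) : ℝ) ^ K * (ϱ₁ ^ d * v.toReal) := by ring
  -- the constants
  set cst := 3 * ϱ₁ / (32 * (m : ℝ) ^ K) with hcstdef
  have hmKpos : (0:ℝ) < (m:ℝ) ^ K := by positivity
  have hcst0 : 0 < cst := by rw [hcstdef]; positivity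
  have hcst1 : cst ≤ 1 := by
    rw [hcstdef, div_le_one (by positivity)]
    have h1 : (1:ℝ) ≤ (m:ℝ) ^ K := one_le_pow₀ (by exact_mod_cast hm0)
    nlinarith
  set ϱ' := ϱ₁ ^ 2 * cst ^ 2 / 100 with hϱ'def
  have hϱ'0 : 0 < ϱ' := by rw [hϱ'def]; positivity
  have hϱ'ϱ₁ : ϱ' ≤ ϱ₁ := by
    rw [hϱ'def]
    have h1 : cst ^ 2 ≤ 1 := by nlinarith
    have h2 : ϱ₁ ^ 2 ≤ ϱ₁ := by nlinarith
    nlinarith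
  refine ⟨ϱ', hϱ'0, fun D hD hvolh => ?_⟩
  -- John pairs with the adjusted constant ϱ₁
  have hpair : ∀ j, ∃ p, JohnPair ϱ₁ (D j) p := fun j => by
    obtain ⟨p, hp⟩ := exists_johnPair (hD j)
    exact ⟨p, johnPair_mono hϱ₁0.le (min_le_left _ _) hp⟩
  choose p hp using hpair
  have hDopen : ∀ j, IsOpen (D j) := fun j => (hp j).1
  have hDbdd : ∀ j, Bornology.IsBounded (D j) := fun j => (hp j).2.1
  have hpmem : ∀ j, p j ∈ D j := fun j => (hp j).2.2.1
  set R := fun j => jrad (D j) (p j) with hRdef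
  have hRpos : ∀ j, 0 < R j := fun j => jrad_pos hd (hDopen j) (hDbdd j) (hpmem j)
  set Ω := ⋃ j, D j with hΩdef
  have hDsub : ∀ j, D j ⊆ Ω := fun j => subset_iUnion D j
  -- the intersections are nonempty
  have hinter : ∀ j, (D 0 ∩ D j).Nonempty := by
    intro j
    rcases Nat.eq_zero_or_pos j with rfl | hj
    · exact ⟨p 0, hpmem 0, hpmem 0⟩
    have h1 : 0 < volume (D j) := (hDopen j).measure_pos volume ⟨p j, hpmem j⟩
    have h2 : volume (D 0 ∩ D j) ≠ 0 := by
      intro h0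
      have := hvolh j hj
      rw [h0, mul_zero] at this
      exact absurd this (by simpa using h1.ne')
    exact nonempty_of_measure_ne_zero h2
  -- uniform size bound
  have hRle : ∀ j, 1 ≤ j → ϱ₁ * R j ≤ max 1 (c₀ * R 0 ^ d) := by
    intro j hj
    have hvollow : ENNReal.ofReal ((ϱ₁ * R j) ^ d) * v ≤ volume (D j) := by
      have h1 : volume (ball (p j) (ϱ₁ * R j)) ≤ volume (D j) :=
        measure_mono (ball_center_subset (hp j) hϱ₁0 hd)
      rwa [Measure.addHaar_ball_of_pos volume (p j)
        (mul_pos hϱ₁0 (hRpos j)), finrank_euclideanSpace_fin, ← hvdef] at h1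
    have hvolup : volume (D 0) ≤ ENNReal.ofReal (R 0 ^ d) * v := by
      have h1 : volume (D 0) ≤ volume (closedBall (p 0) (R 0)) :=
        measure_mono (subset_closedBall_jrad (hDbdd 0))
      rwa [Measure.addHaar_closedBall volume (p 0) (hRpos 0).le,
        finrank_euclideanSpace_fin, ← hvdef] at h1
    have hchain : ENNReal.ofReal ((ϱ₁ * R j) ^ d) * v ≤
        ENNReal.ofReal (c₀ * R 0 ^ d) * v := by
      calc ENNReal.ofReal ((ϱ₁ * R j) ^ d) * v ≤ volume (D j) := hvollow
      _ ≤ ENNReal.ofReal c₀ * volume (D 0 ∩ D j) := hvolh j hj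
      _ ≤ ENNReal.ofReal c₀ * volume (D 0) :=
          mul_le_mul_right (measure_mono inter_subset_left) _
      _ ≤ ENNReal.ofReal c₀ * (ENNReal.ofReal (R 0 ^ d) * v) := mul_le_mul_right hvolup _
      _ = ENNReal.ofReal (c₀ * R 0 ^ d) * v := by
          rw [ENNReal.ofReal_mul hc.le, mul_assoc]
    have hreal : (ϱ₁ * R j) ^ d ≤ c₀ * R 0 ^ d := by
      have h2 := (ENNReal.mul_le_mul_iff_left
        (by rw [hvdef]; exact (measure_ball_pos volume _ one_pos).ne') hvne).mp hchain
      rwa [ENNReal.ofReal_le_ofReal_iff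
        (mul_nonneg hc.le (pow_nonneg (jrad_nonneg (hDbdd 0) (hpmem 0)) d))] at h2
    rcases le_or_gt (ϱ₁ * R j) 1 with h | h
    · exact h.trans (le_max_left _ _)
    · refine le_trans ?_ (le_max_right _ _)
      calc ϱ₁ * R j ≤ (ϱ₁ * R j) ^ d := le_self_pow₀ h.le (by omega)
      _ ≤ c₀ * R 0 ^ d := hreal
  set B := (max 1 (c₀ * R 0 ^ d)) / ϱ₁ + R 0 with hBdef
  have hRB : ∀ j, R j ≤ B := by
    intro j
    rcases Nat.eq_zero_or_pos j with rfl | hj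
    · rw [hBdef]
      have : (0:ℝ) < max 1 (c₀ * R 0 ^ d) := lt_max_of_lt_left one_pos
      have := div_nonneg this.le hϱ₁0.le
      linarith
    · have h := hRle j hj
      rw [hBdef]
      have h2 : R j ≤ max 1 (c₀ * R 0 ^ d) / ϱ₁ := by
        rw [le_div_iff₀ hϱ₁0, mul_comm]
        exact h
      linarith [jrad_nonneg (hDbdd 0) (hpmem 0)]
  -- boundedness of the union
  have hΩbdd : Bornology.IsBounded Ω := by
    apply (Metric.isBounded_closedBall (x := p 0) (r := 2 * B + R 0)).subset
    rintro z hz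
    obtain ⟨j, hzj⟩ := mem_iUnion.mp hz
    obtain ⟨y, hy0, hyj⟩ := hinter j
    have h1 : dist z (p j) ≤ R j := dist_le_jrad (hDbdd j) hzj
    have h2 : dist (p j) y ≤ R j := by
      rw [dist_comm]; exact dist_le_jrad (hDbdd j) hyj
    have h3 : dist y (p 0) ≤ R 0 := dist_le_jrad (hDbdd 0) hy0
    have := hRB j
    calc dist z (p 0) ≤ dist z (p j) + dist (p j) y + dist y (p 0) := dist_triangle4 _ _ _ _
    _ ≤ 2 * B + R 0 := by linarith
  have hΩopen : IsOpen Ω := isOpen_iUnion hDopen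
  have hΩc : Ωᶜ.Nonempty := compl_nonempty hd hΩbdd
  -- connectedness
  have hΩconn : IsConnected Ω := by
    have heq : Ω = ⋃ j, (D j ∪ D 0) := by
      apply subset_antisymm
      · exact iUnion_mono fun j => subset_union_left
      · exact iUnion_subset fun j => union_subset (hDsub j) (hDsub 0)
    refine ⟨⟨p 0, mem_iUnion.mpr ⟨0, hpmem 0⟩⟩, ?_⟩
    rw [heq]
    apply isPreconnected_iUnion
    · exact ⟨p 0, mem_iInter.mpr fun j => Or.inr (hpmem 0)⟩
    · intro j
      obtain ⟨y, hy0, hyj⟩ := hinter j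
      exact IsPreconnected.union y hyj hy0 (hD j).2.1.isPreconnected (hD 0).2.1.isPreconnected
  refine ⟨hΩopen, hΩconn, hΩbdd, p 0, hDsub 0 (hpmem 0), ?_⟩
  rintro x ⟨hxΩ, hxp⟩
  obtain ⟨j, hxj⟩ := mem_iUnion.mp hxΩ
  by_cases hxD0 : x ∈ D 0
  · -- x lies in the central domain : use its John curve directly
    obtain ⟨L, hL0, hLR, γ, hγ0, hγL, hmap, hvar, hball⟩ := curve_from (hp 0) hϱ₁0 hd hxD0
    refine ⟨L, hL0, γ, hγ0, hγL, fun u hu => hDsub 0 (hmap hu), hvar, fun t ht => ?_⟩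
    exact (ball_subset_ball (mul_le_mul_of_nonneg_right hϱ'ϱ₁ ht.1)).trans
      ((hball t ht).trans (hDsub 0))
  · -- x lies in some other domain
    have hj1 : 1 ≤ j := by
      rcases Nat.eq_zero_or_pos j with rfl | h
      · exact absurd hxj hxD0
      · exact h
    -- deep point of the intersection
    obtain ⟨y, hyS, hdeep0⟩ := exists_deep_point hd hϱ₁0 hϱ₁1 hc hm4 hm2 hm1 hK (hp j)
      inter_subset_right (hvolh j hj1)
    have hdeep : cst * R j ≤ Metric.infDist y (D j)ᶜ := by
      have heq : cst * R j = 3 * ϱ₁ * jrad (D j) (p j) / (32 * (m:ℝ) ^ K) := by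
        rw [hcstdef, hRdef]; ring
      rw [heq]; exact hdeep0
    -- the three curves
    obtain ⟨L₁, hL₁0, hL₁R, γ₁, hγ₁0, hγ₁L, hmap₁, hvar₁, hball₁⟩ :=
      curve_from (hp j) hϱ₁0 hd hxj
    obtain ⟨L₂, hL₂0, hL₂R, γ₂, hγ₂0, hγ₂L, hmap₂, hvar₂, hball₂⟩ :=
      curve_from (hp j) hϱ₁0 hd hyS.2
    obtain ⟨L₃, hL₃0, hL₃R, γ₃, hγ₃0, hγ₃L, hmap₃, hvar₃, hball₃⟩ :=
      curve_from (hp 0) hϱ₁0 hd hyS.1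
    obtain ⟨Γ, hΓfun⟩ : ∃ Γ : ℝ → EuclideanSpace ℝ (Fin d), ∀ t, Γ t =
        if t ≤ L₁ then γ₁ t else if t ≤ L₁ + L₂ then γ₂ (L₁ + L₂ - t)
        else γ₃ (t - (L₁ + L₂)) := ⟨_, fun t => rfl⟩
    obtain ⟨L, hLdef⟩ : ∃ L : ℝ, L = L₁ + L₂ + L₃ := ⟨_, rfl⟩
    refine ⟨L, by rw [hLdef]; linarith, Γ, ?_, ?_, ?_, ?_, ?_⟩
    · rw [hΓfun 0, if_pos hL₁0]
      exact hγ₁0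
    · rw [hΓfun L]
      rcases le_or_gt L L₁ with h | h
      · have hL2 : L₂ = 0 := by rw [hLdef] at h; linarith
        have hL3 : L₃ = 0 := by rw [hLdef] at h; linarith
        have hLL1 : L = L₁ := by rw [hLdef, hL2, hL3]; ring
        rw [if_pos h, hLL1, hγ₁L, ← hγ₂L, hL2, hγ₂0, ← hγ₃0, ← hL3, hγ₃L]
      rcases le_or_gt L (L₁ + L₂) with h' | h'
      · have hL3 : L₃ = 0 := by rw [hLdef] at h'; linarith
        have hLL : L = L₁ + L₂ := by rw [hLdef, hL3]; ring
        rw [if_neg (not_le.mpr h), if_pos h', hLL]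
        simp only [sub_self]
        rw [hγ₂0, ← hγ₃0, ← hL3, hγ₃L]
      · rw [if_neg (not_le.mpr h), if_neg (not_le.mpr h')]
        rw [show L - (L₁ + L₂) = L₃ by rw [hLdef]; ring, hγ₃L]
    · -- maps into Ω
      intro u hu
      rw [hΓfun u]
      split_ifs with hc1 hc2
      · exact hDsub j (hmap₁ ⟨hu.1, hc1⟩)
      · exact hDsub j (hmap₂ ⟨by linarith [hu.1, not_le.mp hc1], by linarith⟩)
      · refine hDsub 0 (hmap₃ ⟨by linarith [not_le.mp hc2], ?_⟩)
        have := hu.2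
        rw [hLdef] at this
        linarith
    · -- arc-length parametrization
      rw [hLdef]
      exact concat_var hL₁0 hL₂0 hL₃0 hvar₁ hvar₂ hvar₃
        (by rw [hγ₁L, hγ₂L]) (by rw [hγ₂0, hγ₃0]) hΓfun
    · -- the carrot condition
      intro t ht
      apply ball_subset_of_le_infDist
      -- distance estimates along the three pieces
      have f1 : ∀ u ∈ Icc (0:ℝ) L₁, ϱ₁ * u ≤ Metric.infDist (γ₁ u) Ωᶜ := fun u hu =>
        le_infDist_of_ball_subset hΩc ((hball₁ u hu).trans (hDsub j))
      have f2 : ∀ u ∈ Icc (0:ℝ) L₂, ϱ₁ * u ≤ Metric.infDist (γ₂ u) Ωᶜ := fun u hu =>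
        le_infDist_of_ball_subset hΩc ((hball₂ u hu).trans (hDsub j))
      have f3 : ∀ u ∈ Icc (0:ℝ) L₃, ϱ₁ * u ≤ Metric.infDist (γ₃ u) Ωᶜ := fun u hu =>
        le_infDist_of_ball_subset hΩc ((hball₃ u hu).trans (hDsub 0))
      have hyΩ : cst * R j ≤ Metric.infDist y Ωᶜ := by
        refine hdeep.trans (Metric.infDist_le_infDist_of_subset ?_ hΩc)
        exact compl_subset_compl.mpr (hDsub j)
      have f2' : ∀ u ∈ Icc (0:ℝ) L₂, cst * R j - u ≤ Metric.infDist (γ₂ u) Ωᶜ := by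
        intro u hu
        have hd1 : dist y (γ₂ u) ≤ u := by
          have := dist_le_of_unit_speed hvar₂ (le_refl 0) hu.1 hu.2
          rw [hγ₂0] at this
          linarith
        have := Metric.infDist_le_infDist_add_dist (x := y) (y := γ₂ u) (s := Ωᶜ)
        linarith
      have f3' : ∀ u ∈ Icc (0:ℝ) L₃, cst * R j - u ≤ Metric.infDist (γ₃ u) Ωᶜ := by
        intro u hu
        have hd1 : dist y (γ₃ u) ≤ u := by
          have := dist_le_of_unit_speed hvar₃ (le_refl 0) hu.1 hu.2
          rw [hγ₃0] at this
          linarith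
        have := Metric.infDist_le_infDist_add_dist (x := y) (y := γ₃ u) (s := Ωᶜ)
        linarith
      -- size bounds
      have hRj := hRpos j
      rw [hLdef] at ht
      rw [hΓfun t, hϱ'def]
      split_ifs with hc1 hc2
      · -- first piece
        have h1 := f1 t ⟨ht.1, hc1⟩
        calc ϱ₁ ^ 2 * cst ^ 2 / 100 * t ≤ ϱ₁ * t := by
              apply mul_le_mul_of_nonneg_right _ ht.1
              have ha : cst ^ 2 ≤ 1 := by nlinarith
              have hb : ϱ₁ ^ 2 ≤ ϱ₁ := by nlinarith
              nlinarith
        _ ≤ Metric.infDist (γ₁ t) Ωᶜ := h1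
      · -- second piece
        have hu : L₁ + L₂ - t ∈ Icc (0:ℝ) L₂ :=
          ⟨by linarith, by linarith [not_le.mp hc1]⟩
        have g1 := f2 _ hu
        have g2 := f2' _ hu
        have hts : ϱ₁ * t ≤ 2 * R j + ϱ₁ * (L₁ + L₂ - t) := by
          have := mul_le_mul_of_nonneg_left hc2 hϱ₁0.le
          have := mul_nonneg hϱ₁0.le hu.1
          linarith
        exact arith_piece hϱ₁0 hϱ₁1 hcst0 hcst1 hRj hu.1 ht.1 hts g1 g2
      · -- third piece
        have hu : t - (L₁ + L₂) ∈ Icc (0:ℝ) L₃ :=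
          ⟨by linarith [not_le.mp hc2], by linarith [ht.2]⟩
        have g1 := f3 _ hu
        have g2 := f3' _ hu
        have hts : ϱ₁ * t ≤ 2 * R j + ϱ₁ * (t - (L₁ + L₂)) := by
          have hr : ϱ₁ * t = ϱ₁ * (L₁ + L₂) + ϱ₁ * (t - (L₁ + L₂)) := by ring
          linarith
        exact arith_piece hϱ₁0 hϱ₁1 hcst0 hcst1 hRj hu.1 ht.1 hts g1 g2
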